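/- Let G be a digraph with n vertices and m edges and let k ≥ 0. Let G_k be the k-fold directed subdivision of G and let χ(x) = det(x·I_{n+km} − A_{G_k}) be its characteristic polynomial. Then, identically in x, x^{kn} · χ(x) = x^{km} · det(x^{k+1}·I_n − A_G). -/

import Mathlib

open Matrix

noncomputable section
open scoped Classical

namespace SubdivStmt5

/-- The adjacency matrix of the digraph with edge set `E`, tail map `t` and head map `h`. -/
def adjOf {V E : Type*} [Fintype E] (t h : E → V) : Matrix V V ℂ :=
  Matrix.of fun u v => ((Finset.univ.filter fun e => t e = u ∧ h e = v).card : ℂ)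

/-- The adjacency matrix of the `k`-fold directed subdivision of the digraph `(V, E, t, h)`:
each edge `e : u → v` is replaced by the directed path
`u → (e,1) → ⋯ → (e,k) → v` (for `k = 0` the edge is kept). -/
def subdivAdj {V E : Type*} [Fintype E] (t h : E → V) (k : ℕ) :
    Matrix (V ⊕ E × Fin k) (V ⊕ E × Fin k) ℂ :=
  Matrix.of fun i j =>
    match i, j with
    | Sum.inl u, Sum.inl v => if k = 0 then adjOf t h u v else 0
    | Sum.inl u, Sum.inr (e, j) => if t e = u ∧ (j : ℕ) = 0 then 1 else 0
    | Sum.inr (e, j), Sum.inl v => if h e = v ∧ (j : ℕ) + 1 = k then 1 else 0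
    | Sum.inr (e, j), Sum.inr (e', j') => if e = e' ∧ (j' : ℕ) = (j : ℕ) + 1 then 1 else 0

end SubdivStmt5

open SubdivStmt5

/-!
Order the vertices of `G_k` as `V ⊕ E × Fin k`. Then `x • 1 - A_{G_k}` is the block matrix
`[[x • 1, -B], [-C, D]]`, where `B` and `C` record the first and last edge of each subdivided
path and `D = 1 ⊗ (x • 1 - S)` with `S` the shift of the path `0 → ⋯ → k-1`, so
`det D = x^{km}`. Weighting the `i`-th inner vertex of the path of `e : u → v` by `x^i` gives a
matrix `Z` with `D Z = x^k C` and `B Z = A_G`. Multiplying on the right by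
`[[x^k • 1, 0], [Z, 1]]` therefore clears the lower left block and leaves `x^{k+1} • 1 - A_G` in
the upper left one; taking determinants gives the identity, with no division by `x`.
-/

open scoped Kronecker

namespace Matrix

theorem det_fromBlocks_mul_pow_card_of_smul_add_mul_eq_zero {R m n : Type*} [CommRing R]
    [Fintype m] [Fintype n] [DecidableEq m] [DecidableEq n] (c : R) (A : Matrix m m R)
    (B : Matrix m n R) (C : Matrix n m R) (D : Matrix n n R) (Z : Matrix n m R)
    (hZ : c • C + D * Z = 0) :
    (fromBlocks A B C D).det * c ^ Fintype.card m = (c • A + B * Z).det * D.det := by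
  have hprod : fromBlocks A B C D * fromBlocks (c • 1) 0 Z 1 =
      fromBlocks (c • A + B * Z) B 0 D := by
    simp [fromBlocks_multiply, hZ]
  have := congrArg det hprod
  rwa [det_mul, det_fromBlocks_zero₁₂, det_fromBlocks_zero₂₁, det_smul, det_one, det_one,
    mul_one, mul_one] at this

def finShift (R : Type*) [Zero R] [One R] (k : ℕ) : Matrix (Fin k) (Fin k) R :=
  Matrix.of fun i j => if (j : ℕ) = i + 1 then 1 else 0

variable {R : Type*} [CommRing R]

theorem det_smul_one_sub_finShift (k : ℕ) (x : R) : (x • 1 - finShift R k).det = x ^ k := by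
  have htri : (x • 1 - finShift R k).IsUpperTriangular := by
    intro i j hji
    have hij : i ≠ j := (show j < i from hji).ne'
    have hj : (j : ℕ) ≠ i + 1 := by have : (j : ℕ) < i := hji; omega
    simp [finShift, one_apply_ne hij, hj]
  rw [det_of_isUpperTriangular htri]
  simp [finShift]

theorem smul_one_sub_finShift_mulVec_pow (k : ℕ) (x : R) :
    (x • 1 - finShift R k) *ᵥ (fun j : Fin k => x ^ (j : ℕ)) =
      fun i : Fin k => if (i : ℕ) + 1 = k then x ^ k else 0 := by
  ext i
  have hshift : (finShift R k *ᵥ fun j : Fin k => x ^ (j : ℕ)) i =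
      if (i : ℕ) + 1 < k then x ^ ((i : ℕ) + 1) else 0 := by
    simp [finShift, mulVec, dotProduct,
      Fin.sum_univ_eq_sum_range (fun j => if j = (i : ℕ) + 1 then x ^ j else 0) k]
  rw [sub_mulVec, Pi.sub_apply, hshift, smul_mulVec, one_mulVec]
  rcases (Nat.succ_le_of_lt i.isLt).lt_or_eq with hlt | heq
  · simp [hlt, hlt.ne, pow_succ']
  · simp [← heq, pow_succ']

end Matrix

namespace SubdivStmt5

variable {V E : Type*}

def subdivEntry (R : Type*) [Zero R] [One R] (t : E → V) (k : ℕ) : Matrix V (E × Fin k) R :=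
  Matrix.of fun u p => if t p.1 = u ∧ (p.2 : ℕ) = 0 then 1 else 0

def subdivExit (R : Type*) [Zero R] [One R] (h : E → V) (k : ℕ) : Matrix (E × Fin k) V R :=
  Matrix.of fun p v => if h p.1 = v ∧ (p.2 : ℕ) + 1 = k then 1 else 0

def subdivWeights {R : Type*} [MonoidWithZero R] (h : E → V) (k : ℕ) (x : R) :
    Matrix (E × Fin k) V R :=
  Matrix.of fun p v => if h p.1 = v then x ^ (p.2 : ℕ) else 0

theorem subdivAdj_eq_fromBlocks [Fintype E] [DecidableEq E] (t h : E → V) {k : ℕ}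
    (hk : k ≠ 0) :
    subdivAdj t h k =
      fromBlocks 0 (subdivEntry ℂ t k) (subdivExit ℂ h k) (1 ⊗ₖ finShift ℂ k) := by
  ext (u | ⟨e, i⟩) (v | ⟨e', j⟩) <;>
    simp [subdivAdj, subdivEntry, subdivExit, finShift, hk, one_apply, ← ite_and, and_comm]

theorem smul_one_sub_subdivAdj_eq_fromBlocks [Fintype E] [DecidableEq V] [DecidableEq E]
    (t h : E → V) {k : ℕ} (hk : k ≠ 0) (x : ℂ) :
    x • 1 - subdivAdj t h k = fromBlocks (x • 1) (-subdivEntry ℂ t k) (-subdivExit ℂ h k)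
      (1 ⊗ₖ (x • 1 - finShift ℂ k)) := by
  rw [subdivAdj_eq_fromBlocks t h hk, ← fromBlocks_one, fromBlocks_smul, sub_eq_add_neg,
    fromBlocks_neg, fromBlocks_add]
  simp only [smul_zero, zero_add, neg_zero, add_zero]
  refine congrArg (fromBlocks _ _ _) ?_
  ext ⟨e, i⟩ ⟨e', j⟩
  simp [one_apply, sub_eq_add_neg, mul_add, ← ite_and, and_comm]

theorem kronecker_mul_subdivWeights {R : Type*} [CommRing R] [Fintype E] [DecidableEq E]
    (h : E → V) (k : ℕ) (x : R) :
    ((1 : Matrix E E R) ⊗ₖ (x • 1 - finShift R k)) * subdivWeights h k x =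
      x ^ k • subdivExit R h k := by
  refine Matrix.ext fun ⟨e, i⟩ v => ?_
  have hpath := congrFun (smul_one_sub_finShift_mulVec_pow k x) i
  rw [mulVec, dotProduct] at hpath
  rw [mul_apply, Fintype.sum_prod_type, Finset.sum_eq_single e]
  · by_cases hv : h e = v
    · simpa [subdivWeights, subdivExit, hv] using hpath
    · simp [subdivWeights, subdivExit, hv]
  · intro e' _ he'
    simp [one_apply_ne he'.symm]
  · simp

theorem subdivEntry_mul_subdivWeights [Fintype E] (t h : E → V) {k : ℕ} (hk : k ≠ 0)
    (x : ℂ) : subdivEntry ℂ t k * subdivWeights h k x = adjOf t h := by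
  refine Matrix.ext fun u v => ?_
  have hfirst : ∑ i : Fin k, (if (i : ℕ) = 0 then x ^ (i : ℕ) else 0) = 1 := by
    rw [Fin.sum_univ_eq_sum_range (fun i => if i = 0 then x ^ i else 0)]
    simp [Nat.pos_of_ne_zero hk]
  rw [adjOf, of_apply, Finset.natCast_card_filter, mul_apply, Fintype.sum_prod_type]
  refine Finset.sum_congr rfl fun e _ => ?_
  by_cases hu : t e = u <;> by_cases hv : h e = v <;>
    simp [subdivEntry, subdivWeights, hu, hv, hfirst]

end SubdivStmt5

/-- The characteristic polynomial of the `k`-fold directed subdivision: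
`x^{kn} · χ(x) = x^{km} · det(x^{k+1}·I_n − A_G)`. -/
theorem stmt_5 {V E : Type*} [Fintype V] [DecidableEq V] [Fintype E] [DecidableEq E]
    (t h : E → V) (k : ℕ) (x : ℂ) :
    x ^ (k * Fintype.card V) *
        (x • (1 : Matrix (V ⊕ E × Fin k) (V ⊕ E × Fin k) ℂ) - subdivAdj t h k).det =
      x ^ (k * Fintype.card E) *
        (x ^ (k + 1) • (1 : Matrix V V ℂ) - adjOf t h).det := by
  rcases eq_or_ne k 0 with rfl | hk
  · simp only [Nat.zero_mul, pow_zero, one_mul, Nat.zero_add, pow_one]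
    rw [← det_submatrix_equiv_self (Equiv.sumEmpty V (E × Fin 0)).symm]
    congr 1
    ext u v
    simp [subdivAdj, one_apply]
  have hZ : x ^ k • -subdivExit ℂ h k +
      ((1 : Matrix E E ℂ) ⊗ₖ (x • 1 - finShift ℂ k)) * subdivWeights h k x = 0 := by
    rw [kronecker_mul_subdivWeights, smul_neg, neg_add_cancel]
  have key := det_fromBlocks_mul_pow_card_of_smul_add_mul_eq_zero _ (x • 1)
    (-subdivEntry ℂ t k) _ _ _ hZ
  rw [← smul_one_sub_subdivAdj_eq_fromBlocks t h hk, Matrix.neg_mul,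
    subdivEntry_mul_subdivWeights t h hk, det_kronecker, det_smul_one_sub_finShift, det_one,
    one_pow, one_mul, smul_smul, ← pow_succ,
    ← sub_eq_add_neg, ← pow_mul, ← pow_mul] at key
  rw [mul_comm, key, mul_comm, mul_comm k]
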